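/- Let σ : S ≃ S and τ : A ≃ A be bijections such that R(σ(s)) = R(s) for all s ∈ S and P(σ(s), τ(a), σ(s')) = P(s, a, s') for all s, s' ∈ S and a ∈ A. Then the optimal value function is invariant under the symmetry: V*(σ(s)) = V*(s) for all s ∈ S. -/
import Mathlib

open Finset

/-- Bellman operator of a finite discounted MDP. -/
noncomputable def bellman {S A : Type*} [Fintype S] [Fintype A] [Nonempty A]
    (R : S → ℝ) (P : S → A → S → ℝ) (γ : ℝ) (V : S → ℝ) (s : S) : ℝ :=
  R s + γ * Finset.univ.sup' Finset.univ_nonempty (fun a => ∑ s', P s a s' * V s')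

lemma abs_sup'_sub_sup'_le {A : Type*} [Fintype A] [Nonempty A]
    (F G : A → ℝ) (M : ℝ) (h : ∀ a, |F a - G a| ≤ M) :
    |Finset.univ.sup' Finset.univ_nonempty F - Finset.univ.sup' Finset.univ_nonempty G| ≤ M := by
  rw [abs_sub_le_iff]
  constructor
  · rw [sub_le_iff_le_add]
    apply Finset.sup'_le
    intro a _
    have := (abs_sub_le_iff.mp (h a)).1
    have hG : G a ≤ Finset.univ.sup' Finset.univ_nonempty G := Finset.le_sup' G (Finset.mem_univ a)
    linarith
  · rw [sub_le_iff_le_add]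
    apply Finset.sup'_le
    intro a _
    have := (abs_sub_le_iff.mp (h a)).2
    have hF : F a ≤ Finset.univ.sup' Finset.univ_nonempty F := Finset.le_sup' F (Finset.mem_univ a)
    linarith

lemma sup'_univ_equiv {A : Type*} [Fintype A] [Nonempty A] (e : A ≃ A) (f : A → ℝ) :
    Finset.univ.sup' Finset.univ_nonempty (fun a => f (e a)) =
    Finset.univ.sup' Finset.univ_nonempty f := by
  apply le_antisymm
  · exact Finset.sup'_le _ _ fun a _ => Finset.le_sup' f (Finset.mem_univ (e a))
  · apply Finset.sup'_le
    intro a _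
    have : f a = f (e (e.symm a)) := by simp
    rw [this]
    exact Finset.le_sup' (fun a => f (e a)) (Finset.mem_univ (e.symm a))

/-- The optimal value function is invariant under symmetries of the MDP. -/
theorem optimal_value_symmetry_invariant {S A : Type*}
    [Fintype S] [Fintype A] [Nonempty S] [Nonempty A]
    (R : S → ℝ) (P : S → A → S → ℝ) (γ : ℝ)
    (hP0 : ∀ s a s', 0 ≤ P s a s') (hP1 : ∀ s a, ∑ s', P s a s' = 1)
    (hγ0 : 0 ≤ γ) (hγ1 : γ < 1)
    (Vstar : S → ℝ) (hVstar : ∀ s, Vstar s = bellman R P γ Vstar s)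
    (σ : S ≃ S) (τ : A ≃ A)
    (hR : ∀ s, R (σ s) = R s)
    (hP : ∀ s a s', P (σ s) (τ a) (σ s') = P s a s') :
    ∀ s, Vstar (σ s) = Vstar s := by
  set W : S → ℝ := fun s => Vstar (σ s) with hWdef
  have hW : ∀ s, W s = bellman R P γ W s := by
    intro s
    have h1 : W s = bellman R P γ Vstar (σ s) := hVstar (σ s)
    rw [h1]
    unfold bellman
    rw [hR]
    congr 2
    rw [← sup'_univ_equiv τ (fun a => ∑ s', P (σ s) a s' * Vstar s')]
    apply Finset.sup'_congr _ rfl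
    intro a _
    calc ∑ s', P (σ s) (τ a) s' * Vstar s'
        = ∑ s', P (σ s) (τ a) (σ s') * Vstar (σ s') :=
          (Equiv.sum_comp σ (fun t => P (σ s) (τ a) t * Vstar t)).symm
      _ = ∑ s', P s a s' * W s' := by
          apply Finset.sum_congr rfl
          intro s' _
          rw [hP]
  -- uniqueness of fixed point
  set M : ℝ := Finset.univ.sup' Finset.univ_nonempty (fun s => |W s - Vstar s|) with hM
  have hMle : ∀ s, |W s - Vstar s| ≤ M := fun s =>
    Finset.le_sup' (fun s => |W s - Vstar s|) (Finset.mem_univ s)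
  have key : ∀ s, |W s - Vstar s| ≤ γ * M := by
    intro s
    rw [hW s, hVstar s]
    unfold bellman
    have h2 : R s + γ * Finset.univ.sup' Finset.univ_nonempty (fun a => ∑ s', P s a s' * W s')
        - (R s + γ * Finset.univ.sup' Finset.univ_nonempty (fun a => ∑ s', P s a s' * Vstar s'))
        = γ * (Finset.univ.sup' Finset.univ_nonempty (fun a => ∑ s', P s a s' * W s')
        - Finset.univ.sup' Finset.univ_nonempty (fun a => ∑ s', P s a s' * Vstar s')) := by ring
    rw [h2, abs_mul, abs_of_nonneg hγ0]
    apply mul_le_mul_of_nonneg_left _ hγ0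
    apply abs_sup'_sub_sup'_le
    intro a
    rw [← Finset.sum_sub_distrib]
    calc |∑ s', (P s a s' * W s' - P s a s' * Vstar s')|
        ≤ ∑ s', |P s a s' * W s' - P s a s' * Vstar s'| := Finset.abs_sum_le_sum_abs _ _
      _ = ∑ s', P s a s' * |W s' - Vstar s'| := by
          apply Finset.sum_congr rfl
          intro s' _
          rw [← mul_sub, abs_mul, abs_of_nonneg (hP0 s a s')]
      _ ≤ ∑ s', P s a s' * M := by
          apply Finset.sum_le_sum
          intro s' _
          exact mul_le_mul_of_nonneg_left (hMle s') (hP0 s a s')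
      _ = M := by rw [← Finset.sum_mul, hP1, one_mul]
  have hMγ : M ≤ γ * M := by
    apply Finset.sup'_le
    intro s _
    exact key s
  have hM0 : 0 ≤ M := le_trans (abs_nonneg _) (hMle (Classical.arbitrary S))
  have : M ≤ 0 := by nlinarith
  intro s
  have := abs_nonpos_iff.mp (le_trans (hMle s) this)
  linarith [sub_eq_zero.mp this]
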